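/- Suppose x, y in (0,1), and normalized confusion matrices for two groups satisfy false positive parity (TNa·y = TNb·x), predictive parity (TPa·FPb = TPb·FPa), predictive equality (FNa·TNb = FNb·TNa), and all entries of both confusion matrices are strictly positive. Then x = y. -/
import Mathlib

theorem stmt
    (x y TPa FNa TNa FPa TPb FNb TNb FPb : ℝ)
    (hx0 : 0 < x) (hx1 : x < 1) (hy0 : 0 < y) (hy1 : y < 1)
    (hTPa : 0 ≤ TPa) (hFNa : 0 ≤ FNa) (hTNa : 0 ≤ TNa) (hFPa : 0 ≤ FPa)
    (hTPb : 0 ≤ TPb) (hFNb : 0 ≤ FNb) (hTNb : 0 ≤ TNb) (hFPb : 0 ≤ FPb)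
    (hra : TPa + FNa = 1 - x) (hra' : TNa + FPa = x)
    (hrb : TPb + FNb = 1 - y) (hrb' : TNb + FPb = y)
    (hfpp : TNa * y = TNb * x)
    (hpp : TPa * FPb = TPb * FPa)
    (hpe : FNa * TNb = FNb * TNa)
    (hTPa' : 0 < TPa)
    (hFNa' : 0 < FNa)
    (hTNa' : 0 < TNa)
    (hFPa' : 0 < FPa)
    (hTPb' : 0 < TPb)
    (hFNb' : 0 < FNb)
    (hTNb' : 0 < TNb)
    (hFPb' : 0 < FPb)
    : x = y := by
  have eq1 : FPb * x = y * FPa := by linear_combination x * hrb' - y * hra' + hfpp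
  have eq2 : TPa * y = TPb * x := by
    have h : (TPa * y) * FPa = (TPb * x) * FPa := by linear_combination x * hpp - TPa * eq1
    exact mul_right_cancel₀ (ne_of_gt hFPa') h
  have eq3 : FNa * y = FNb * x := by
    have h : (FNa * y) * TNa = (FNb * x) * TNa := by linear_combination x * hpe + FNa * hfpp
    exact mul_right_cancel₀ (ne_of_gt hTNa') h
  have : (1 - x) * y = (1 - y) * x := by linear_combination eq2 + eq3 - y * hra + x * hrb
  nlinarith [this]
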